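/- Let D be any class of objects in a triangulated category T with products and coproducts. If coloc(D) is reflective (the inclusion has a left adjoint), then coloc(D) = (^⊥D)^⊥; and if loc(D) is coreflective (the inclusion has a right adjoint), then loc(D) = ^⊥(D^⊥). -/

import Mathlib

open CategoryTheory Category Limits Pretriangulated

universe v u

namespace Paper

section General

variable {T : Type u} [Category.{v} T]

/-- A full subcategory (given by its class of objects) is closed under retracts. -/
def ClosedUnderRetracts (S : Set T) : Prop :=
  ∀ ⦃A B : T⦄, A ∈ S → (∃ (i : B ⟶ A) (r : A ⟶ B), i ≫ r = 𝟙 B) → B ∈ S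

/-- A full subcategory is weakly reflective: every object admits a weak reflection into it. -/
def WeaklyReflective (S : Set T) : Prop :=
  ∀ X : T, ∃ (X' : T) (l : X ⟶ X'), X' ∈ S ∧
    ∀ ⦃Y : T⦄, Y ∈ S → ∀ f : X ⟶ Y, ∃ g : X' ⟶ Y, l ≫ g = f

/-- A full subcategory is weakly coreflective. -/
def WeaklyCoreflective (S : Set T) : Prop :=
  ∀ X : T, ∃ (X' : T) (c : X' ⟶ X), X' ∈ S ∧
    ∀ ⦃Y : T⦄, Y ∈ S → ∀ f : Y ⟶ X, ∃ g : Y ⟶ X', g ≫ c = f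

/-- A full subcategory is reflective: the inclusion has a left adjoint. -/
def ReflectiveSet (S : Set T) : Prop :=
  (ObjectProperty.ι (P := (fun X => X ∈ S : ObjectProperty T))).IsRightAdjoint

/-- A full subcategory is coreflective: the inclusion has a right adjoint. -/
def CoreflectiveSet (S : Set T) : Prop :=
  (ObjectProperty.ι (P := (fun X => X ∈ S : ObjectProperty T))).IsLeftAdjoint

end General

/-- The data of an endofunctor together with a natural transformation from the identity
(a candidate reflection with its unit). -/
structure ReflectionData (T : Type u) [Category.{v} T] where
  L : T ⥤ T
  unit : 𝟭 T ⟶ L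

/-- The data of an endofunctor together with a natural transformation to the identity
(a candidate coreflection with its counit). -/
structure CoreflectionData (T : Type u) [Category.{v} T] where
  C : T ⥤ T
  counit : C ⟶ 𝟭 T

section ReflData

variable {T : Type u} [Category.{v} T]

/-- The `L`-local objects: the essential image of `L`. -/
def ReflectionData.localObjects (R : ReflectionData T) : Set T := R.L.essImage

/-- `(L, l)` is a reflection: every morphism to an `L`-local object factors uniquely
through the unit. -/
def ReflectionData.IsReflection (R : ReflectionData T) : Prop :=
  ∀ ⦃X W : T⦄, W ∈ R.localObjects → ∀ f : X ⟶ W,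
    ∃! g : R.L.obj X ⟶ W, R.unit.app X ≫ g = f

/-- The `C`-colocal objects: the essential image of `C`. -/
def CoreflectionData.colocalObjects (Q : CoreflectionData T) : Set T := Q.C.essImage

/-- `(C, c)` is a coreflection: every morphism from a `C`-colocal object factors uniquely
through the counit. -/
def CoreflectionData.IsCoreflection (Q : CoreflectionData T) : Prop :=
  ∀ ⦃X W : T⦄, W ∈ Q.colocalObjects → ∀ f : W ⟶ X,
    ∃! g : W ⟶ Q.C.obj X, g ≫ Q.counit.app X = f

end ReflData

section Triangulated

variable {T : Type u} [Category.{v} T] [HasZeroObject T] [Preadditive T] [HasShift T ℤ]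
  [∀ n : ℤ, (shiftFunctor T n).Additive] [Pretriangulated T]

/-- Closed under fibres: the first vertex of a distinguished triangle whose second and third
vertices lie in `S` lies in `S`. -/
def ClosedUnderFibres (S : Set T) : Prop :=
  ∀ ⦃X Y Z : T⦄ (u : X ⟶ Y) (v : Y ⟶ Z) (w : Z ⟶ X⟦(1:ℤ)⟧),
    (Triangle.mk u v w ∈ distTriang T) → Y ∈ S → Z ∈ S → X ∈ S

/-- Closed under cofibres. -/
def ClosedUnderCofibres (S : Set T) : Prop :=
  ∀ ⦃X Y Z : T⦄ (u : X ⟶ Y) (v : Y ⟶ Z) (w : Z ⟶ X⟦(1:ℤ)⟧),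
    (Triangle.mk u v w ∈ distTriang T) → X ∈ S → Y ∈ S → Z ∈ S

/-- Closed under extensions. -/
def ClosedUnderExtensions (S : Set T) : Prop :=
  ∀ ⦃X Y Z : T⦄ (u : X ⟶ Y) (v : Y ⟶ Z) (w : Z ⟶ X⟦(1:ℤ)⟧),
    (Triangle.mk u v w ∈ distTriang T) → X ∈ S → Z ∈ S → Y ∈ S

/-- `^⊥D`: objects `X` with `T(X, ΣᵏD) = 0` for all `D ∈ D` and all integers `k`. -/
def leftOrth (D : Set T) : Set T :=
  {X | ∀ ⦃E : T⦄, E ∈ D → ∀ k : ℤ, ∀ f : X ⟶ E⟦k⟧, f = 0}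

/-- `D^⊥`: objects `Y` with `T(ΣᵏD, Y) = 0` for all `D ∈ D` and all integers `k`. -/
def rightOrth (D : Set T) : Set T :=
  {Y | ∀ ⦃E : T⦄, E ∈ D → ∀ k : ℤ, ∀ f : E⟦k⟧ ⟶ Y, f = 0}

/-- `⊾D`: objects `X` with `T(X, ΣᵏD) = 0` for all `D ∈ D` and all `k ≤ 0`. -/
def leftSemiOrth (D : Set T) : Set T :=
  {X | ∀ ⦃E : T⦄, E ∈ D → ∀ k : ℤ, k ≤ 0 → ∀ f : X ⟶ E⟦k⟧, f = 0}

/-- `D⊿`: objects `Y` with `T(ΣᵏD, Y) = 0` for all `D ∈ D` and all `k ≥ 0`. -/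
def rightSemiOrth (D : Set T) : Set T :=
  {Y | ∀ ⦃E : T⦄, E ∈ D → ∀ k : ℤ, 0 ≤ k → ∀ f : E⟦k⟧ ⟶ Y, f = 0}

section WithLimits

variable [HasProducts.{v} T] [HasCoproducts.{v} T]

/-- Closed under all (small) products. -/
def ClosedUnderProducts (S : Set T) : Prop :=
  ∀ ⦃ι : Type v⦄ (f : ι → T), (∀ i, f i ∈ S) → (∏ᶜ f) ∈ S

/-- Closed under all (small) coproducts. -/
def ClosedUnderCoproducts (S : Set T) : Prop :=
  ∀ ⦃ι : Type v⦄ (f : ι → T), (∀ i, f i ∈ S) → (∐ f) ∈ S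

/-- Semilocalizing: closed under coproducts, cofibres and extensions. -/
def IsSemilocalizing (S : Set T) : Prop :=
  ClosedUnderCoproducts S ∧ ClosedUnderCofibres S ∧ ClosedUnderExtensions S

/-- Semicolocalizing: closed under products, fibres and extensions. -/
def IsSemicolocalizing (S : Set T) : Prop :=
  ClosedUnderProducts S ∧ ClosedUnderFibres S ∧ ClosedUnderExtensions S

/-- Localizing: closed under coproducts, fibres, cofibres and extensions. -/
def IsLocalizing (S : Set T) : Prop :=
  ClosedUnderCoproducts S ∧ ClosedUnderFibres S ∧ ClosedUnderCofibres S ∧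
    ClosedUnderExtensions S

/-- Colocalizing: closed under products, fibres, cofibres and extensions. -/
def IsColocalizing (S : Set T) : Prop :=
  ClosedUnderProducts S ∧ ClosedUnderFibres S ∧ ClosedUnderCofibres S ∧
    ClosedUnderExtensions S

/-- The smallest semilocalizing subcategory containing `D`. -/
def semiloc (D : Set T) : Set T := ⋂₀ {S : Set T | IsSemilocalizing S ∧ D ⊆ S}

/-- The smallest semicolocalizing subcategory containing `D`. -/
def semicoloc (D : Set T) : Set T := ⋂₀ {S : Set T | IsSemicolocalizing S ∧ D ⊆ S}

/-- The smallest localizing subcategory containing `D`. -/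
def loc (D : Set T) : Set T := ⋂₀ {S : Set T | IsLocalizing S ∧ D ⊆ S}

/-- The smallest colocalizing subcategory containing `D`. -/
def coloc (D : Set T) : Set T := ⋂₀ {S : Set T | IsColocalizing S ∧ D ⊆ S}

end WithLimits

end Triangulated

/-!
If `η : X ⟶ L` is the unit of a reflection onto a triangulated subcategory `S`, its cone `Z`
admits no nonzero map to `S`: a map `Z ⟶ W` vanishes on `L`, so it factors through `X⟦1⟧`,
and there it factors through `η⟦1⟧`, which dies on `Z`. For `S = coloc D` this puts `Z`
in `^⊥D`, so when `X ∈ (^⊥D)^⊥` the connecting map `Z ⟶ X⟦1⟧` vanishes; then `Z = 0`,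
`η` is an isomorphism and `X ∈ S`. The coreflective case is dual.
-/

section Reflections

variable {T : Type u} [Category.{v} T] {S : Set T}

lemma ReflectiveSet.exists_unit (hS : ReflectiveSet S) (X : T) :
    ∃ (L : T) (η : X ⟶ L), L ∈ S ∧
      ∀ W ∈ S, Function.Bijective (fun g : L ⟶ W ↦ η ≫ g) := by
  obtain ⟨F, ⟨adj⟩⟩ := hS.exists_leftAdjoint
  refine ⟨(F.obj X).obj, adj.unit.app X, (F.obj X).property, fun W hW ↦ ?_⟩
  let e := (ObjectProperty.fullyFaithfulι _).homEquiv.symm.trans (adj.homEquiv X ⟨W, hW⟩)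
  have he : ⇑e = fun g ↦ adj.unit.app X ≫ g := by
    funext g
    rw [Equiv.trans_apply, Adjunction.homEquiv_unit]
    rfl
  exact he ▸ e.bijective

lemma CoreflectiveSet.exists_counit (hS : CoreflectiveSet S) (X : T) :
    ∃ (Γ : T) (ε : Γ ⟶ X), Γ ∈ S ∧
      ∀ W ∈ S, Function.Bijective (fun g : W ⟶ Γ ↦ g ≫ ε) := by
  obtain ⟨G, ⟨adj⟩⟩ := hS.exists_rightAdjoint
  refine ⟨(G.obj X).obj, adj.counit.app X, (G.obj X).property, fun W hW ↦ ?_⟩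
  let e := (ObjectProperty.fullyFaithfulι _).homEquiv.symm.trans (adj.homEquiv ⟨W, hW⟩ X).symm
  have he : ⇑e = fun g ↦ g ≫ adj.counit.app X := by
    funext g
    rw [Equiv.trans_apply, Adjunction.homEquiv_counit]
    rfl
  exact he ▸ e.bijective

end Reflections

section Orthogonals

variable {T : Type u} [Category.{v} T] [Preadditive T] [HasShift T ℤ] {E : Set T}

lemma eq_zero_of_mem_leftOrth {X W : T} (hX : X ∈ leftOrth E) (hW : W ∈ E) (f : X ⟶ W) :
    f = 0 := by
  simpa using hX hW 0 (f ≫ (shiftFunctorZero T ℤ).inv.app W)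

lemma eq_zero_of_mem_rightOrth {Y W : T} (hY : Y ∈ rightOrth E) (hW : W ∈ E) (f : W ⟶ Y) :
    f = 0 := by
  simpa using hY hW 0 ((shiftFunctorZero T ℤ).hom.app W ≫ f)

variable [∀ n : ℤ, (shiftFunctor T n).Additive]

lemma shift_mem_leftOrth {X : T} (hX : X ∈ leftOrth E) (n : ℤ) : X⟦n⟧ ∈ leftOrth E := by
  intro W hW k f
  have := hX hW (k - n) ((shiftFunctorCompIsoId T n (-n) (by ring)).inv.app X ≫ f⟦-n⟧' ≫
    (shiftFunctorAdd' T k (-n) (k - n) (by ring)).inv.app W)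
  simpa [Functor.map_eq_zero_iff] using this

lemma shift_mem_rightOrth {Y : T} (hY : Y ∈ rightOrth E) (n : ℤ) : Y⟦n⟧ ∈ rightOrth E := by
  intro W hW k f
  have := hY hW (k - n) ((shiftFunctorAdd' T k (-n) (k - n) (by ring)).hom.app W ≫ f⟦-n⟧' ≫
    (shiftFunctorCompIsoId T n (-n) (by ring)).hom.app Y)
  simpa [Functor.map_eq_zero_iff] using this

lemma subset_leftOrth_rightOrth (D : Set T) : D ⊆ leftOrth (rightOrth D) :=
  fun _ hE _ hW k f ↦ eq_zero_of_mem_rightOrth (shift_mem_rightOrth hW k) hE f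

lemma subset_rightOrth_leftOrth (D : Set T) : D ⊆ rightOrth (leftOrth D) :=
  fun _ hE _ hW k f ↦ eq_zero_of_mem_leftOrth (shift_mem_leftOrth hW k) hE f

end Orthogonals

section ShiftedFactorizations

variable {T : Type u} [Category.{v} T] [HasShift T ℤ] {S : Set T} (n : ℤ)
  (hS : ∀ W ∈ S, W⟦-n⟧ ∈ S)
include hS

lemma surjective_shift_map_comp {X L : T} (η : X ⟶ L)
    (hη : ∀ W ∈ S, Function.Surjective (fun g : L ⟶ W ↦ η ≫ g)) {W : T} (hW : W ∈ S) :
    Function.Surjective (fun g : L⟦n⟧ ⟶ W ↦ η⟦n⟧' ≫ g) := by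
  intro q
  let adj := (shiftEquiv T n).toAdjunction
  obtain ⟨r, hr⟩ := hη _ (hS W hW) (adj.homEquiv X W q)
  refine ⟨(adj.homEquiv L W).symm r, ?_⟩
  exact (adj.homEquiv_naturality_left_symm η r).symm.trans
    ((congrArg _ hr).trans (Equiv.symm_apply_apply _ _))

lemma injective_comp_shift_map {Γ X : T} (ε : Γ ⟶ X)
    (hε : ∀ W ∈ S, Function.Injective (fun g : W ⟶ Γ ↦ g ≫ ε)) {W : T} (hW : W ∈ S) :
    Function.Injective (fun g : W ⟶ Γ⟦n⟧ ↦ g ≫ ε⟦n⟧') := by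
  let adj := (shiftEquiv T n).symm.toAdjunction
  intro g₁ g₂ h
  obtain ⟨f₁, rfl⟩ := (adj.homEquiv W Γ).surjective g₁
  obtain ⟨f₂, rfl⟩ := (adj.homEquiv W Γ).surjective g₂
  have h' : adj.homEquiv W X (f₁ ≫ ε) = adj.homEquiv W X (f₂ ≫ ε) := by
    rw [adj.homEquiv_naturality_right, adj.homEquiv_naturality_right]
    exact h
  exact congrArg _ (hε _ (hS W hW) ((adj.homEquiv W X).injective h'))

end ShiftedFactorizations

section TriangulatedSubcategories

variable {T : Type u} [Category.{v} T] [HasZeroObject T] [Preadditive T] [HasShift T ℤ]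
  [∀ n : ℤ, (shiftFunctor T n).Additive] [Pretriangulated T]

open ZeroObject

structure IsTriangulatedSubcategory (S : Set T) : Prop where
  fibres : ClosedUnderFibres S
  cofibres : ClosedUnderCofibres S
  extensions : ClosedUnderExtensions S

namespace IsTriangulatedSubcategory

variable {S : Set T} (hS : IsTriangulatedSubcategory S) {A : T}
include hS

lemma zero_mem (hA : A ∈ S) : (0 : T) ∈ S :=
  hS.cofibres _ _ _ (contractible_distinguished A) hA hA

lemma mem_of_iso {B : T} (e : A ≅ B) (hA : A ∈ S) : B ∈ S :=
  hS.extensions e.hom (0 : B ⟶ 0) 0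
    ((Triangle.distinguished_iff_of_isZero₃ _ (isZero_zero T)).2 (inferInstanceAs (IsIso e.hom)))
    hA (hS.zero_mem hA)

lemma shift_one_mem (hA : A ∈ S) : A⟦(1 : ℤ)⟧ ∈ S :=
  hS.cofibres _ _ _ (rot_of_distTriang _ (contractible_distinguished A)) hA (hS.zero_mem hA)

lemma shift_neg_one_mem (hA : A ∈ S) : A⟦(-1 : ℤ)⟧ ∈ S :=
  hS.fibres _ _ _ (inv_rot_of_distTriang _ (contractible_distinguished₁ A)) (hS.zero_mem hA) hA

lemma shift_mem (hA : A ∈ S) (n : ℤ) : A⟦n⟧ ∈ S := by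
  induction n using Int.induction_on with
  | zero => exact hS.mem_of_iso ((shiftFunctorZero T ℤ).symm.app A) hA
  | succ n ih =>
    exact hS.mem_of_iso ((shiftFunctorAdd' T (n : ℤ) 1 (n + 1) rfl).symm.app A)
      (hS.shift_one_mem ih)
  | pred n ih =>
    exact hS.mem_of_iso ((shiftFunctorAdd' T (-n : ℤ) (-1) (-n - 1) (by ring)).symm.app A)
      (hS.shift_neg_one_mem ih)

end IsTriangulatedSubcategory

lemma IsTriangulatedSubcategory.sInter {𝒮 : Set (Set T)}
    (h𝒮 : ∀ S ∈ 𝒮, IsTriangulatedSubcategory S) : IsTriangulatedSubcategory (⋂₀ 𝒮) where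
  fibres _ _ _ u v w hT hY hZ := Set.mem_sInter.2 fun S hS ↦
    (h𝒮 S hS).fibres u v w hT (Set.mem_sInter.1 hY S hS) (Set.mem_sInter.1 hZ S hS)
  cofibres _ _ _ u v w hT hX hY := Set.mem_sInter.2 fun S hS ↦
    (h𝒮 S hS).cofibres u v w hT (Set.mem_sInter.1 hX S hS) (Set.mem_sInter.1 hY S hS)
  extensions _ _ _ u v w hT hX hZ := Set.mem_sInter.2 fun S hS ↦
    (h𝒮 S hS).extensions u v w hT (Set.mem_sInter.1 hX S hS) (Set.mem_sInter.1 hZ S hS)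

lemma isTriangulatedSubcategory_leftOrth (E : Set T) :
    IsTriangulatedSubcategory (leftOrth E) where
  fibres X Y Z u v w hT hY hZ W hW k f := by
    obtain ⟨g, rfl⟩ := Triangle.yoneda_exact₂ _ (inv_rot_of_distTriang _ hT) f
      (shift_mem_leftOrth hZ (-1) hW k _)
    exact (congrArg (u ≫ ·) (hY hW k g)).trans comp_zero
  cofibres X Y Z u v w hT hX hY W hW k f := by
    obtain ⟨g, rfl⟩ := Triangle.yoneda_exact₃ _ hT f (hY hW k _)
    exact (congrArg (w ≫ ·) (shift_mem_leftOrth hX 1 hW k g)).trans comp_zero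
  extensions X Y Z u v w hT hX hZ W hW k f := by
    obtain ⟨g, rfl⟩ := Triangle.yoneda_exact₂ _ hT f (hX hW k _)
    exact (congrArg (v ≫ ·) (hZ hW k g)).trans comp_zero

lemma isTriangulatedSubcategory_rightOrth (E : Set T) :
    IsTriangulatedSubcategory (rightOrth E) where
  fibres X Y Z u v w hT hY hZ W hW k f := by
    obtain ⟨g, rfl⟩ := Triangle.coyoneda_exact₂ _ (inv_rot_of_distTriang _ hT) f (hY hW k _)
    exact (congrArg (· ≫ _) (shift_mem_rightOrth hZ (-1) hW k g)).trans zero_comp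
  cofibres X Y Z u v w hT hX hY W hW k f := by
    obtain ⟨g, rfl⟩ := Triangle.coyoneda_exact₃ _ hT f (shift_mem_rightOrth hX 1 hW k _)
    exact (congrArg (· ≫ v) (hY hW k g)).trans zero_comp
  extensions X Y Z u v w hT hX hZ W hW k f := by
    obtain ⟨g, rfl⟩ := Triangle.coyoneda_exact₂ _ hT f (hZ hW k _)
    exact (congrArg (· ≫ u) (hX hW k g)).trans zero_comp

section Cones

variable {S : Set T} (hS : ∀ W ∈ S, W⟦(-1 : ℤ)⟧ ∈ S)
include hS

lemma eq_zero_of_distTriang_of_reflection {X L Z : T} {η : X ⟶ L} {g : L ⟶ Z}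
    {h : Z ⟶ X⟦(1 : ℤ)⟧} (hT : Triangle.mk η g h ∈ distTriang T)
    (hη : ∀ W ∈ S, Function.Bijective (fun f : L ⟶ W ↦ η ≫ f)) {W : T} (hW : W ∈ S)
    (v : Z ⟶ W) : v = 0 := by
  have hηg : η ≫ g = 0 := comp_distTriang_mor_zero₁₂ _ hT
  have hhη : h ≫ η⟦(1 : ℤ)⟧' = 0 := comp_distTriang_mor_zero₃₁ _ hT
  have hgv : g ≫ v = 0 := (hη W hW).injective <| by simp [reassoc_of% hηg]
  obtain ⟨q, rfl⟩ := Triangle.yoneda_exact₃ _ hT v hgv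
  obtain ⟨r, rfl⟩ := surjective_shift_map_comp 1 hS η (fun W hW ↦ (hη W hW).surjective) hW q
  exact (reassoc_of% hhη) r |>.trans zero_comp

lemma eq_zero_of_distTriang_of_coreflection {Γ X Z : T} {ε : Γ ⟶ X} {g : X ⟶ Z}
    {h : Z ⟶ Γ⟦(1 : ℤ)⟧} (hT : Triangle.mk ε g h ∈ distTriang T)
    (hε : ∀ W ∈ S, Function.Bijective (fun f : W ⟶ Γ ↦ f ≫ ε)) {W : T} (hW : W ∈ S)
    (u : W ⟶ Z) : u = 0 := by
  have hεg : ε ≫ g = 0 := comp_distTriang_mor_zero₁₂ _ hT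
  have hhε : h ≫ ε⟦(1 : ℤ)⟧' = 0 := comp_distTriang_mor_zero₃₁ _ hT
  have huh : u ≫ h = 0 :=
    injective_comp_shift_map 1 hS ε (fun W hW ↦ (hε W hW).injective) hW <| by
      simp [hhε]
  obtain ⟨w, rfl⟩ := Triangle.coyoneda_exact₃ _ hT u huh
  obtain ⟨s, rfl⟩ := (hε W hW).surjective w
  exact (Category.assoc _ _ _).trans ((s ≫= hεg).trans comp_zero)

end Cones

variable {S D : Set T} (hS : IsTriangulatedSubcategory S) (hDS : D ⊆ S)
include hS hDS

lemma rightOrth_leftOrth_subset_of_reflectiveSet (hrefl : ReflectiveSet S) :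
    rightOrth (leftOrth D) ⊆ S := by
  intro X hX
  obtain ⟨L, η, hL, hη⟩ := hrefl.exists_unit X
  obtain ⟨Z, g, h, hT⟩ := distinguished_cocone_triangle η
  have hZS : ∀ W ∈ S, ∀ v : Z ⟶ W, v = 0 := fun W hW ↦
    eq_zero_of_distTriang_of_reflection (fun W hW ↦ hS.shift_mem hW (-1)) hT hη hW
  have hZD : Z ∈ leftOrth D := fun E hE k ↦ hZS _ (hS.shift_mem (hDS hE) k)
  have hh : h = 0 := eq_zero_of_mem_rightOrth (shift_mem_rightOrth hX 1) hZD h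
  obtain ⟨t, ht⟩ := Triangle.coyoneda_exact₃ _ hT (𝟙 Z) ((congrArg _ hh).trans comp_zero)
  have hZ : IsZero Z := (IsZero.iff_id_eq_zero Z).2 <|
    ht.trans ((congrArg (· ≫ g) (hZS L hL t)).trans zero_comp)
  have : IsIso η := (Triangle.isZero₃_iff_isIso₁ _ hT).1 hZ
  exact hS.mem_of_iso (asIso η).symm hL

lemma leftOrth_rightOrth_subset_of_coreflectiveSet (hcorefl : CoreflectiveSet S) :
    leftOrth (rightOrth D) ⊆ S := by
  intro X hX
  obtain ⟨Γ, ε, hΓ, hε⟩ := hcorefl.exists_counit X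
  obtain ⟨Z, g, h, hT⟩ := distinguished_cocone_triangle ε
  have hSZ : ∀ W ∈ S, ∀ u : W ⟶ Z, u = 0 := fun W hW ↦
    eq_zero_of_distTriang_of_coreflection (fun W hW ↦ hS.shift_mem hW (-1)) hT hε hW
  have hZD : Z ∈ rightOrth D := fun E hE k ↦ hSZ _ (hS.shift_mem (hDS hE) k)
  have hg : g = 0 := eq_zero_of_mem_leftOrth hX hZD g
  obtain ⟨t, ht⟩ := Triangle.yoneda_exact₃ _ hT (𝟙 Z) ((congrArg (· ≫ _) hg).trans zero_comp)
  have hZ : IsZero Z := (IsZero.iff_id_eq_zero Z).2 <|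
    ht.trans ((congrArg (h ≫ ·) (hSZ _ (hS.shift_mem hΓ 1) t)).trans comp_zero)
  have : IsIso ε := (Triangle.isZero₃_iff_isIso₁ _ hT).1 hZ
  exact hS.mem_of_iso (asIso ε) hΓ

end TriangulatedSubcategories

section Localizing

variable {T : Type u} [Category.{v} T] [HasZeroObject T] [Preadditive T] [HasShift T ℤ]
  [∀ n : ℤ, (shiftFunctor T n).Additive] [Pretriangulated T] [HasCoproducts.{v} T]

lemma IsLocalizing.isTriangulatedSubcategory {S : Set T} (hS : IsLocalizing S) :
    IsTriangulatedSubcategory S :=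
  ⟨hS.2.1, hS.2.2.1, hS.2.2.2⟩

lemma isLocalizing_leftOrth (E : Set T) : IsLocalizing (leftOrth E) :=
  have h := isTriangulatedSubcategory_leftOrth E
  ⟨fun _ _ hf _ hW k _ ↦ Sigma.hom_ext _ _ fun i ↦ (hf i hW k _).trans comp_zero.symm,
    h.fibres, h.cofibres, h.extensions⟩

lemma isLocalizing_loc (D : Set T) : IsLocalizing (loc D) :=
  have h := IsTriangulatedSubcategory.sInter (𝒮 := {S | IsLocalizing S ∧ D ⊆ S})
    fun _ hS ↦ hS.1.isTriangulatedSubcategory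
  ⟨fun _ f hf ↦ Set.mem_sInter.2 fun S hS ↦ hS.1.1 f fun i ↦ Set.mem_sInter.1 (hf i) S hS,
    h.fibres, h.cofibres, h.extensions⟩

lemma subset_loc (D : Set T) : D ⊆ loc D :=
  fun _ hX ↦ Set.mem_sInter.2 fun _ hS ↦ hS.2 hX

lemma loc_subset {D S : Set T} (hS : IsLocalizing S) (hDS : D ⊆ S) : loc D ⊆ S :=
  Set.sInter_subset_of_mem ⟨hS, hDS⟩

end Localizing

section Colocalizing

variable {T : Type u} [Category.{v} T] [HasZeroObject T] [Preadditive T] [HasShift T ℤ]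
  [∀ n : ℤ, (shiftFunctor T n).Additive] [Pretriangulated T] [HasProducts.{v} T]

lemma IsColocalizing.isTriangulatedSubcategory {S : Set T} (hS : IsColocalizing S) :
    IsTriangulatedSubcategory S :=
  ⟨hS.2.1, hS.2.2.1, hS.2.2.2⟩

lemma isColocalizing_rightOrth (E : Set T) : IsColocalizing (rightOrth E) :=
  have h := isTriangulatedSubcategory_rightOrth E
  ⟨fun _ _ hf _ hW k _ ↦ Pi.hom_ext _ _ fun i ↦ (hf i hW k _).trans zero_comp.symm,
    h.fibres, h.cofibres, h.extensions⟩

lemma isColocalizing_coloc (D : Set T) : IsColocalizing (coloc D) :=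
  have h := IsTriangulatedSubcategory.sInter (𝒮 := {S | IsColocalizing S ∧ D ⊆ S})
    fun _ hS ↦ hS.1.isTriangulatedSubcategory
  ⟨fun _ f hf ↦ Set.mem_sInter.2 fun S hS ↦ hS.1.1 f fun i ↦ Set.mem_sInter.1 (hf i) S hS,
    h.fibres, h.cofibres, h.extensions⟩

lemma subset_coloc (D : Set T) : D ⊆ coloc D :=
  fun _ hX ↦ Set.mem_sInter.2 fun _ hS ↦ hS.2 hX

lemma coloc_subset {D S : Set T} (hS : IsColocalizing S) (hDS : D ⊆ S) : coloc D ⊆ S :=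
  Set.sInter_subset_of_mem ⟨hS, hDS⟩

end Colocalizing

section Statements

variable {T : Type u} [Category.{v} T] [HasZeroObject T] [Preadditive T] [HasShift T ℤ]
  [∀ n : ℤ, (shiftFunctor T n).Additive] [Pretriangulated T]
  [HasProducts.{v} T] [HasCoproducts.{v} T]

/-- If `coloc(D)` is reflective then `coloc(D) = (^⊥D)^⊥`, and if `loc(D)` is
coreflective then `loc(D) = ^⊥(D^⊥)`. -/
theorem statement9 (D : Set T) :
    (ReflectiveSet (coloc D) → coloc D = rightOrth (leftOrth D)) ∧
    (CoreflectiveSet (loc D) → loc D = leftOrth (rightOrth D)) := by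
  refine ⟨fun hrefl ↦ ?_, fun hcorefl ↦ ?_⟩
  · exact (coloc_subset (isColocalizing_rightOrth _) (subset_rightOrth_leftOrth D)).antisymm
      (rightOrth_leftOrth_subset_of_reflectiveSet
        (isColocalizing_coloc D).isTriangulatedSubcategory (subset_coloc D) hrefl)
  · exact (loc_subset (isLocalizing_leftOrth _) (subset_leftOrth_rightOrth D)).antisymm
      (leftOrth_rightOrth_subset_of_coreflectiveSet
        (isLocalizing_loc D).isTriangulatedSubcategory (subset_loc D) hcorefl)

end Statements

end Paper
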